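/- Fix a > 0 and x₁ > 0, and write w₁ = a/2 − (1/a)·log(x₁/x₂) and w₂ = a/2 − (1/a)·log(x₂/x₁). For every x₂ > 0, the function t ↦ exp(−V_a(x₁, t))·Φ(a/2 − (1/a)·log(x₁/t))/x₁², which equals the partial derivative in the first argument of exp(−V_a), has derivative at t = x₂ equal to exp(−V_a(x₁,x₂))·[ Φ(w₁)·Φ(w₂)/(x₁²·x₂²) + φ(w₁)/(a·x₁²·x₂) ]. This is the closed-form bivariate density of the Brown–Resnick process. -/

import Mathlib

open Real MeasureTheory Filter Topology

/-- The standard normal density φ(t) = (2π)^{-1/2} e^{-t²/2}. -/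
noncomputable def stdNormalPDF (t : ℝ) : ℝ :=
  (Real.sqrt (2 * Real.pi))⁻¹ * Real.exp (-t ^ 2 / 2)

/-- The standard normal cumulative distribution function Φ. -/
noncomputable def stdNormalCDF (t : ℝ) : ℝ :=
  ∫ u in Set.Iic t, stdNormalPDF u

/-- The bivariate Brown–Resnick exponent measure V_a(x₁, x₂). -/
noncomputable def brV (a x₁ x₂ : ℝ) : ℝ :=
  (1 / x₁) * stdNormalCDF (a / 2 - (1 / a) * Real.log (x₁ / x₂)) +
    (1 / x₂) * stdNormalCDF (a / 2 - (1 / a) * Real.log (x₂ / x₁))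


/- Since w₁ + w₂ = a and a·w₁ - a²/2 = log(x₂/x₁), completing the square in φ gives
φ(w₂) = (x₂/x₁)·φ(w₁). Hence the two φ-terms in ∂V/∂x₂ cancel, leaving ∂V/∂x₂ = -Φ(w₂)/x₂²,
and the product rule applied to exp(-V)·Φ(w₁)/x₁² yields the density. -/

theorem hasDerivAt_integral_Iic {f : ℝ → ℝ} (hf : Integrable f) (hcont : Continuous f) (t : ℝ) :
    HasDerivAt (fun s => ∫ u in Set.Iic s, f u) (f t) t := by
  have hsplit : (fun s => ∫ u in Set.Iic s, f u) =
      fun s => (∫ u in Set.Iic 0, f u) + ∫ u in (0 : ℝ)..s, f u := by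
    ext s
    rw [← intervalIntegral.integral_Iic_sub_Iic hf.integrableOn hf.integrableOn]
    ring
  rw [hsplit]
  exact (intervalIntegral.integral_hasDerivAt_right hf.intervalIntegrable
    hcont.stronglyMeasurable.stronglyMeasurableAtFilter hcont.continuousAt).const_add _

theorem integrable_stdNormalPDF : Integrable stdNormalPDF := by
  refine ((integrable_exp_neg_mul_sq (by norm_num : (0 : ℝ) < 1 / 2)).const_mul
    (√(2 * π))⁻¹).congr (Eventually.of_forall fun x => ?_)
  simp only [stdNormalPDF]
  ring_nf

theorem continuous_stdNormalPDF : Continuous stdNormalPDF := by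
  unfold stdNormalPDF
  fun_prop

theorem hasDerivAt_stdNormalCDF (t : ℝ) : HasDerivAt stdNormalCDF (stdNormalPDF t) t :=
  hasDerivAt_integral_Iic integrable_stdNormalPDF continuous_stdNormalPDF t

theorem stdNormalPDF_sub (a w : ℝ) :
    stdNormalPDF (a - w) = exp (a * w - a ^ 2 / 2) * stdNormalPDF w := by
  simp only [stdNormalPDF]
  rw [mul_left_comm, ← exp_add]
  ring_nf

namespace BrownResnick

/-- `arg a x₁ x₂` is `w₁` and `arg a x₂ x₁` is `w₂`. -/
noncomputable def arg (a x y : ℝ) : ℝ := a / 2 - (1 / a) * log (x / y)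

theorem brV_eq_arg (a x y : ℝ) :
    brV a x y = (1 / x) * stdNormalCDF (arg a x y) + (1 / y) * stdNormalCDF (arg a y x) := rfl

theorem arg_add_arg (a x y : ℝ) : arg a x y + arg a y x = a := by
  rw [arg, arg, ← inv_div x y, log_inv]
  ring

theorem mul_arg_sub (a x y : ℝ) (ha : a ≠ 0) : a * arg a x y - a ^ 2 / 2 = log (y / x) := by
  rw [arg, ← inv_div y, log_inv]
  field_simp
  ring

theorem stdNormalPDF_arg_swap (a x y : ℝ) (ha : a ≠ 0) (hx : 0 < x) (hy : 0 < y) :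
    stdNormalPDF (arg a y x) = y / x * stdNormalPDF (arg a x y) := by
  rw [show arg a y x = a - arg a x y by linarith [arg_add_arg a x y], stdNormalPDF_sub,
    mul_arg_sub a x y ha, exp_log (div_pos hy hx)]

theorem hasDerivAt_arg_left (a : ℝ) {x t : ℝ} (hx : x ≠ 0) (ht : t ≠ 0) :
    HasDerivAt (fun y => arg a y x) (-(1 / (a * t))) t := by
  refine ((((hasDerivAt_id t).div_const x).log (div_ne_zero ht hx)).const_mul (1 / a)).const_sub
    (a / 2) |>.congr_deriv ?_
  simp only [id_eq]
  field_simp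

theorem hasDerivAt_arg_right (a : ℝ) {x t : ℝ} (hx : x ≠ 0) (ht : t ≠ 0) :
    HasDerivAt (fun y => arg a x y) (1 / (a * t)) t := by
  have hswap : (fun y => arg a x y) = fun y => a - arg a y x :=
    funext fun y => by linarith [arg_add_arg a x y]
  rw [hswap, ← neg_neg (1 / (a * t))]
  exact (hasDerivAt_arg_left a hx ht).const_sub a

theorem hasDerivAt_brV_right {a x t : ℝ} (ha : a ≠ 0) (hx : 0 < x) (ht : 0 < t) :
    HasDerivAt (fun y => brV a x y) (-(stdNormalCDF (arg a t x) / t ^ 2)) t := by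
  have hΦ₁ := (hasDerivAt_stdNormalCDF _).comp t (hasDerivAt_arg_right a hx.ne' ht.ne')
  have hΦ₂ := (hasDerivAt_stdNormalCDF _).comp t (hasDerivAt_arg_left a hx.ne' ht.ne')
  have hinv : HasDerivAt (fun y : ℝ => 1 / y) (-(t ^ 2)⁻¹) t := by
    simpa only [one_div] using hasDerivAt_inv ht.ne'
  simp only [brV_eq_arg]
  refine ((hΦ₁.const_mul (1 / x)).add (hinv.mul hΦ₂)).congr_deriv ?_
  rw [stdNormalPDF_arg_swap a x t ha hx ht]
  dsimp only [Function.comp_apply]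
  field_simp
  ring

end BrownResnick

open BrownResnick in
theorem stmt10 (a x₁ : ℝ) (ha : 0 < a) (hx₁ : 0 < x₁) :
    ∀ x₂ : ℝ, 0 < x₂ →
      HasDerivAt
        (fun t => Real.exp (-brV a x₁ t) *
          stdNormalCDF (a / 2 - (1 / a) * Real.log (x₁ / t)) / x₁ ^ 2)
        (Real.exp (-brV a x₁ x₂) *
          (stdNormalCDF (a / 2 - (1 / a) * Real.log (x₁ / x₂)) *
              stdNormalCDF (a / 2 - (1 / a) * Real.log (x₂ / x₁)) / (x₁ ^ 2 * x₂ ^ 2) +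
            stdNormalPDF (a / 2 - (1 / a) * Real.log (x₁ / x₂)) / (a * x₁ ^ 2 * x₂)))
        x₂ := by
  intro x₂ hx₂
  have hV := hasDerivAt_brV_right ha.ne' hx₁ hx₂
  have hΦ := (hasDerivAt_stdNormalCDF _).comp x₂ (hasDerivAt_arg_right a hx₁.ne' hx₂.ne')
  refine ((hV.neg.exp.mul hΦ).div_const (x₁ ^ 2)).congr_deriv ?_
  simp only [Pi.neg_apply, Function.comp_apply, arg]
  ring
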